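/- Let n ≥ 1 be an integer, h ≠ 0 a real number, x₀ any real number, and P a real polynomial of degree at most 2n. Then P′(x₀) = (1/(2h)) ∑_{m=1}^{n} α_m^{(1)}(n) · (P(x₀ + mh) − P(x₀ − mh)). -/

import Mathlib

/-!
Only the odd part of `P` enters `P(x₀ + mh) - P(x₀ - mh)`. After the substitution
`x = x₀ + th`, exactness on the odd monomials `t^(2i+1)`, `i < n`, amounts to
`∑ₘ (m²)^i / π_m(n) = 0^i`: this is Lagrange interpolation of `t^i` at the nodes
`1², …, n²`, evaluated at `t = 0`, because `1 / π_m(n)` is the value at `0` of the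
`m`-th Lagrange basis polynomial for these nodes.
-/

open Finset Polynomial

/-- `π_m(n) = ∏_{k=1, k ≠ m}^{n} (1 - m²/k²)`. -/
noncomputable def pim (n m : ℕ) : ℝ :=
  ∏ k ∈ (Finset.Icc 1 n).erase m, (1 - (m : ℝ) ^ 2 / (k : ℝ) ^ 2)

/-- `α_m^{(1)}(n) = 1 / (m · π_m(n))`. -/
noncomputable def alpha1 (n m : ℕ) : ℝ := 1 / ((m : ℝ) * pim n m)

theorem Lagrange.eval_zero_basis {F ι : Type*} [Field F] [DecidableEq ι] (s : Finset ι)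
    (v : ι → F) (i : ι) (hv : ∀ k ∈ s.erase i, v k ≠ 0) :
    (Lagrange.basis s v i).eval 0 = ∏ k ∈ s.erase i, (1 - v i / v k)⁻¹ := by
  rw [Lagrange.basis, eval_prod]
  refine prod_congr rfl fun k hk => ?_
  rw [Lagrange.basisDivisor, eval_mul, eval_C, eval_sub, eval_X, eval_C, one_sub_div (hv k hk),
    inv_div, div_eq_inv_mul, ← neg_sub, inv_neg, zero_sub, neg_mul_neg]

theorem eval_zero_basis_sq (n m : ℕ) :
    (Lagrange.basis (Icc 1 n) (fun k : ℕ => (k : ℝ) ^ 2) m).eval 0 = (pim n m)⁻¹ := by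
  rw [Lagrange.eval_zero_basis, pim, prod_inv_distrib]
  intro k hk
  have : 1 ≤ k := (mem_Icc.mp (mem_of_mem_erase hk)).1
  positivity

theorem sum_sq_pow_div_pim (n i : ℕ) (hi : i < n) :
    ∑ m ∈ Icc 1 n, ((m : ℝ) ^ 2) ^ i / pim n m = 0 ^ i := by
  have hinj : Set.InjOn (fun k : ℕ => (k : ℝ) ^ 2) (Icc 1 n) := fun a _ b _ hab => by
    simpa using hab
  have hdeg : (X ^ i : ℝ[X]).degree < #(Icc 1 n) := by
    rw [degree_X_pow, Nat.card_Icc, Nat.add_sub_cancel]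
    exact_mod_cast hi
  have := congrArg (eval 0) (Lagrange.eq_interpolate hinj hdeg)
  simpa [Lagrange.interpolate_apply, eval_finsetSum, eval_zero_basis_sq, div_eq_mul_inv]
    using this.symm

theorem sum_alpha1_mul_pow_sub_neg_pow (n j : ℕ) (hj : j ≤ 2 * n) :
    ∑ m ∈ Icc 1 n, alpha1 n m * ((m : ℝ) ^ j - (-(m : ℝ)) ^ j) = if j = 1 then 2 else 0 := by
  rcases Nat.even_or_odd j with hj_even | ⟨i, rfl⟩
  · simp only [hj_even.neg_pow, sub_self, mul_zero, sum_const_zero]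
    rw [if_neg (by rintro rfl; exact Nat.not_even_one hj_even)]
  · have hterm : ∀ m ∈ Icc 1 n, alpha1 n m * ((m : ℝ) ^ (2 * i + 1) - (-(m : ℝ)) ^ (2 * i + 1))
        = 2 * (((m : ℝ) ^ 2) ^ i / pim n m) := fun m hm => by
      have : (m : ℝ) ≠ 0 := by have := (mem_Icc.mp hm).1; positivity
      rw [alpha1, Odd.neg_pow ⟨i, rfl⟩]
      field_simp
      ring
    rw [sum_congr rfl hterm, ← mul_sum, sum_sq_pow_div_pim n i (by omega)]
    rcases i with _ | i <;> simp

theorem eval_zero_derivative_eq_central_diff (n : ℕ) (Q : ℝ[X]) (hQ : Q.natDegree ≤ 2 * n) :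
    (derivative Q).eval 0 =
      (1 / 2) * ∑ m ∈ Icc 1 n, alpha1 n m * (Q.eval (m : ℝ) - Q.eval (-(m : ℝ))) := by
  refine induction_with_natDegree_le (fun Q : ℝ[X] => (derivative Q).eval 0 =
      (1 / 2) * ∑ m ∈ Icc 1 n, alpha1 n m * (Q.eval (m : ℝ) - Q.eval (-(m : ℝ))))
    (2 * n) (by simp) (fun j c _ hj => ?_) (fun f g _ _ hf hg => ?_) Q hQ
  · simp only [derivative_C_mul_X_pow, eval_mul, eval_C, eval_pow, eval_X, ← mul_sub,
      mul_left_comm (alpha1 n _) c, ← mul_sum, sum_alpha1_mul_pow_sub_neg_pow n j hj]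
    rcases j with _ | _ | j <;> simp [mul_comm c]
  · simp only [derivative_add, eval_add, hf, hg, ← mul_add, ← sum_add_distrib]
    congr 1
    refine sum_congr rfl fun m _ => ?_
    ring

theorem central_diff_first_deriv_exact_at_general (n : ℕ) (h : ℝ) (hh : h ≠ 0)
    (x₀ : ℝ) (P : Polynomial ℝ) (hP : P.degree ≤ 2 * n) :
    (Polynomial.derivative P).eval x₀ =
      (1 / (2 * h)) *
        ∑ m ∈ Finset.Icc 1 n,
          alpha1 n m * (P.eval (x₀ + (m : ℝ) * h) - P.eval (x₀ - (m : ℝ) * h)) := by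
  set Q := P.comp (C h * X + C x₀)
  have hQ_natDegree : Q.natDegree ≤ 2 * n := by
    rw [natDegree_comp, natDegree_linear hh, mul_one]
    exact natDegree_le_iff_degree_le.mpr (mod_cast hP)
  have hQ_eval (t : ℝ) : Q.eval t = P.eval (x₀ + t * h) := by
    simp only [Q, eval_comp, eval_add, eval_mul, eval_C, eval_X]
    congr 1
    ring
  have hQ_derivative : (derivative Q).eval 0 = h * (derivative P).eval x₀ := by
    simp [Q, derivative_comp, eval_comp]
  have hQ := eval_zero_derivative_eq_central_diff n Q hQ_natDegree
  simp only [hQ_derivative, hQ_eval, neg_mul, ← sub_eq_add_neg] at hQ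
  rw [one_div_mul_eq_div, eq_div_iff (mul_ne_zero two_ne_zero hh)]
  linear_combination 2 * hQ

/-- for every `n ≥ 1`, `h ≠ 0`, arbitrary real `x₀` and real polynomial `P`
of degree at most `2n`,
`P′(x₀) = (1/(2h)) ∑_{m=1}^{n} α_m^{(1)}(n) (P(x₀ + mh) - P(x₀ - mh))`. -/
theorem central_diff_first_deriv_exact_at (n : ℕ) (hn : 1 ≤ n) (h : ℝ) (hh : h ≠ 0)
    (x₀ : ℝ) (P : Polynomial ℝ) (hP : P.degree ≤ 2 * n) :
    (Polynomial.derivative P).eval x₀ =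
      (1 / (2 * h)) *
        ∑ m ∈ Finset.Icc 1 n,
          alpha1 n m * (P.eval (x₀ + (m : ℝ) * h) - P.eval (x₀ - (m : ℝ) * h)) :=
  central_diff_first_deriv_exact_at_general n h hh x₀ P hP
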